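/- Let n ≥ 2 and let α_n be an optimal set of n-means for P containing no point of (1/4, 1/2). Set α¹ = α_n ∩ J₁, α² = α_n ∩ J₂ and j = card(α¹). Then S₁⁻¹(α¹) is an optimal set of j-means and S₂⁻¹(α²) is an optimal set of (n−j)-means for P, and V_n = (1/64)·V_j + (3/16)·V_{n−j}. -/

import Mathlib

open MeasureTheory Set
open scoped ENNReal Classical

noncomputable section

/-- The similarity map `S₁(x) = x/4`. -/
def S1 (x : ℝ) : ℝ := x / 4

/-- The similarity map `S₂(x) = x/2 + 1/2`. -/
def S2 (x : ℝ) : ℝ := x / 2 + 1 / 2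

/-- `P` satisfies the self-similarity relation `P = (1/4)·P∘S₁⁻¹ + (3/4)·P∘S₂⁻¹`. -/
def SelfSimilar (P : Measure ℝ) : Prop :=
  P = (1/4 : ℝ≥0∞) • P.map S1 + (3/4 : ℝ≥0∞) • P.map S2

/-- For a word `σ` over `{1,2}` (encoded as `Fin 2`, `0 ↦ S₁`, `1 ↦ S₂`),
the composition `S_σ = S_{σ₁} ∘ ⋯ ∘ S_{σ_k}`. -/
def Sw : List (Fin 2) → ℝ → ℝ
  | [] => id
  | i :: σ => (if i = 0 then S1 else S2) ∘ Sw σ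

/-- `p_σ`, the product of the probabilities `p₁ = 1/4`, `p₂ = 3/4` along `σ`. -/
def pw : List (Fin 2) → ℝ
  | [] => 1
  | i :: σ => (if i = 0 then (1:ℝ)/4 else 3/4) * pw σ

/-- `s_σ`, the product of the contraction ratios `s₁ = 1/4`, `s₂ = 1/2` along `σ`. -/
def sw : List (Fin 2) → ℝ
  | [] => 1
  | i :: σ => (if i = 0 then (1:ℝ)/4 else 1/2) * sw σ

/-- `c(σ)`, the number of occurrences of the symbol `1` (encoded `0`) in `σ`. -/
def cnt (σ : List (Fin 2)) : ℕ := σ.count 0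

/-- The cylinder interval `J_σ = S_σ([0,1])`. -/
def J (σ : List (Fin 2)) : Set ℝ := Sw σ '' Set.Icc 0 1

/-- The distortion error `V(P;α) = ∫ min_{a ∈ α} (x-a)² dP`. -/
def distortion (P : Measure ℝ) (α : Finset ℝ) : ℝ :=
  ∫ x, sInf ((fun a => (x - a) ^ 2) '' (α : Set ℝ)) ∂P

/-- The `n`-th quantization error `V_n`. -/
def qError (P : Measure ℝ) (n : ℕ) : ℝ :=
  sInf {e | ∃ α : Finset ℝ, α.Nonempty ∧ α.card ≤ n ∧ e = distortion P α}

/-- `α` is an optimal set of `n`-means for `P`. -/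
def IsOptimal (P : Measure ℝ) (n : ℕ) (α : Finset ℝ) : Prop :=
  α.Nonempty ∧ α.card ≤ n ∧ distortion P α = qError P n

/-- `q_σ := P(J_σ) · λ(J_σ)²`. -/
def qnt (P : Measure ℝ) (σ : List (Fin 2)) : ℝ :=
  (P (J σ)).toReal * ((volume (J σ)).toReal) ^ 2


lemma S1_cont : Continuous S1 := by unfold S1; fun_prop
lemma S2_cont : Continuous S2 := by unfold S2; fun_prop
lemma S1_meas : Measurable S1 := S1_cont.measurable
lemma S2_meas : Measurable S2 := S2_cont.measurable

lemma Sw0 : Sw [0] = S1 := by funext x; simp [Sw]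
lemma Sw1 : Sw [1] = S2 := by funext x; simp [Sw]

lemma J0_eq : J [0] = Set.Icc 0 (1/4 : ℝ) := by
  rw [J, Sw0]; ext x
  simp only [mem_image, mem_Icc, S1]
  constructor
  · rintro ⟨y, ⟨h1, h2⟩, rfl⟩; constructor <;> linarith
  · rintro ⟨h1, h2⟩; exact ⟨4 * x, ⟨by linarith, by linarith⟩, by ring⟩

lemma J1_eq : J [1] = Set.Icc (1/2 : ℝ) 1 := by
  rw [J, Sw1]; ext x
  simp only [mem_image, mem_Icc, S2]
  constructor
  · rintro ⟨y, ⟨h1, h2⟩, rfl⟩; constructor <;> linarith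
  · rintro ⟨h1, h2⟩; exact ⟨2 * x - 1, ⟨by linarith, by linarith⟩, by ring⟩

lemma S1_preimage_Iio (a : ℝ) : S1 ⁻¹' (Iio a) = Iio (4*a) := by
  ext x; simp only [mem_preimage, mem_Iio, S1]; constructor <;> intro h <;> linarith

lemma S2_preimage_Iio (a : ℝ) : S2 ⁻¹' (Iio a) = Iio (2*a-1) := by
  ext x; simp only [mem_preimage, mem_Iio, S2]; constructor <;> intro h <;> linarith

lemma S1_preimage_Ioi (a : ℝ) : S1 ⁻¹' (Ioi a) = Ioi (4*a) := by
  ext x; simp only [mem_preimage, mem_Ioi, S1]; constructor <;> intro h <;> linarith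

lemma S2_preimage_Ioi (a : ℝ) : S2 ⁻¹' (Ioi a) = Ioi (2*a-1) := by
  ext x; simp only [mem_preimage, mem_Ioi, S2]; constructor <;> intro h <;> linarith

lemma quarter_toReal : ((1/4 : ℝ≥0∞)).toReal = 1/4 := by simp [ENNReal.toReal_div]
lemma threequarter_toReal : ((3/4 : ℝ≥0∞)).toReal = 3/4 := by simp [ENNReal.toReal_div]

variable {P : Measure ℝ} [IsProbabilityMeasure P]

lemma P_apply (hP : SelfSimilar P) {A : Set ℝ} (hA : MeasurableSet A) :
    P A = 1/4 * P (S1 ⁻¹' A) + 3/4 * P (S2 ⁻¹' A) := by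
  conv_lhs => rw [hP]
  simp [Measure.add_apply, Measure.smul_apply, smul_eq_mul,
    Measure.map_apply S1_meas hA, Measure.map_apply S2_meas hA]

lemma P_apply_toReal (hP : SelfSimilar P) {A : Set ℝ} (hA : MeasurableSet A) :
    (P A).toReal = 1/4 * (P (S1 ⁻¹' A)).toReal + 3/4 * (P (S2 ⁻¹' A)).toReal := by
  have hq : (1/4:ℝ≥0∞) ≠ ⊤ := (ENNReal.div_lt_top (by norm_num) (by norm_num)).ne
  have htq : (3/4:ℝ≥0∞) ≠ ⊤ := (ENNReal.div_lt_top (by norm_num) (by norm_num)).ne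
  have h1 : (1/4:ℝ≥0∞) * P (S1 ⁻¹' A) ≠ ⊤ := ENNReal.mul_ne_top hq (measure_ne_top P _)
  have h2 : (3/4:ℝ≥0∞) * P (S2 ⁻¹' A) ≠ ⊤ := ENNReal.mul_ne_top htq (measure_ne_top P _)
  rw [P_apply hP hA, ENNReal.toReal_add h1 h2, ENNReal.toReal_mul, ENNReal.toReal_mul,
    quarter_toReal, threequarter_toReal]

lemma vanish (s : ℕ → Set ℝ) (hmeas : ∀ k, MeasurableSet (s k)) (hanti : Antitone s)
    (hempty : ⋂ k, s k = ∅)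
    (hstep : ∀ k, (P (s k)).toReal ≤ (P (s (k+1))).toReal) : P (s 0) = 0 := by
  have htend : Filter.Tendsto (fun k => (P (s k)).toReal) Filter.atTop (nhds 0) := by
    have h := tendsto_measure_iInter_atTop (μ := P) (s := s)
      (fun k => (hmeas k).nullMeasurableSet) hanti ⟨0, measure_ne_top P _⟩
    rw [hempty, measure_empty] at h
    have := (ENNReal.tendsto_toReal (by norm_num : (0:ℝ≥0∞) ≠ ∞)).comp h
    simpa [Function.comp_def] using this
  have hmono : ∀ k, (P (s 0)).toReal ≤ (P (s k)).toReal := by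
    intro k
    induction k with
    | zero => exact le_refl _
    | succ k ih => exact ih.trans (hstep k)
  have h0 : (P (s 0)).toReal ≤ 0 :=
    ge_of_tendsto htend (Filter.eventually_atTop.mpr ⟨0, fun k _ => hmono k⟩)
  have : (P (s 0)).toReal = 0 := le_antisymm h0 ENNReal.toReal_nonneg
  exact (ENNReal.toReal_eq_zero_iff _).mp this |>.resolve_right (measure_ne_top P _)

lemma toReal_mono' {A B : Set ℝ} (h : A ⊆ B) : (P A).toReal ≤ (P B).toReal :=
  ENNReal.toReal_mono (measure_ne_top P _) (measure_mono h)

lemma ae_mem_Icc (hP : SelfSimilar P) : ∀ᵐ x ∂P, x ∈ Icc (0:ℝ) 1 := by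
  have hL : P (Iio (-((0:ℕ):ℝ))) = 0 := by
    apply vanish (fun k => Iio (-(k:ℝ))) (fun k => measurableSet_Iio)
      (fun k m hkm => Iio_subset_Iio (by simp only [neg_le_neg_iff]; exact_mod_cast hkm))
    · apply eq_empty_iff_forall_notMem.mpr
      intro x hx
      obtain ⟨k, hk⟩ := exists_nat_ge (-x)
      have := mem_iInter.mp hx k
      simp only [mem_Iio] at this
      linarith
    · intro k
      have hk0 : (0:ℝ) ≤ (k:ℝ) := Nat.cast_nonneg k
      have heq := P_apply_toReal hP (measurableSet_Iio (a := -(k:ℝ)))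
      rw [S1_preimage_Iio, S2_preimage_Iio] at heq
      have h1 : (P (Iio (4 * -(k:ℝ)))).toReal ≤ (P (Iio (-(k:ℝ)))).toReal :=
        toReal_mono' (Iio_subset_Iio (by linarith))
      have h2 : (P (Iio (2 * -(k:ℝ) - 1))).toReal ≤ (P (Iio (-((k:ℝ)+1)))).toReal :=
        toReal_mono' (Iio_subset_Iio (by linarith))
      have hcast : (((k+1:ℕ)):ℝ) = (k:ℝ) + 1 := by push_cast; ring
      simp only [hcast]
      linarith
  have hR : P (Ioi (1 + ((0:ℕ):ℝ))) = 0 := by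
    apply vanish (fun k => Ioi (1 + (k:ℝ))) (fun k => measurableSet_Ioi)
      (fun k m hkm => Ioi_subset_Ioi (by have h : (k:ℝ) ≤ m := Nat.cast_le.mpr hkm; linarith))
    · apply eq_empty_iff_forall_notMem.mpr
      intro x hx
      obtain ⟨k, hk⟩ := exists_nat_ge x
      have := mem_iInter.mp hx k
      simp only [mem_Ioi] at this
      linarith
    · intro k
      have hk0 : (0:ℝ) ≤ (k:ℝ) := Nat.cast_nonneg k
      have heq := P_apply_toReal hP (measurableSet_Ioi (a := 1 + (k:ℝ)))
      rw [S1_preimage_Ioi, S2_preimage_Ioi] at heq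
      have h1 : (P (Ioi (4 * (1 + (k:ℝ))))).toReal ≤ (P (Ioi (1 + ((k:ℝ)+1)))).toReal :=
        toReal_mono' (Ioi_subset_Ioi (by linarith))
      have h2 : (P (Ioi (2 * (1 + (k:ℝ)) - 1))).toReal ≤ (P (Ioi (1 + (k:ℝ)))).toReal :=
        toReal_mono' (Ioi_subset_Ioi (by linarith))
      have hcast : (((k+1:ℕ)):ℝ) = (k:ℝ) + 1 := by push_cast; ring
      simp only [hcast]
      linarith
  simp only [Nat.cast_zero, neg_zero, add_zero] at hL hR
  rw [ae_iff]
  have hsub : {x : ℝ | ¬ x ∈ Icc (0:ℝ) 1} ⊆ Iio 0 ∪ Ioi 1 := by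
    intro x hx
    simp only [mem_setOf_eq, mem_Icc, not_and_or, not_le] at hx
    rcases hx with h | h
    · exact Or.inl h
    · exact Or.inr h
  exact measure_mono_null hsub (le_antisymm
    ((measure_union_le _ _).trans (by rw [hL, hR]; norm_num)) zero_le)

lemma ae_mem_union (hP : SelfSimilar P) :
    ∀ᵐ x ∂P, x ∈ Icc (0:ℝ) (1/4) ∪ Icc (1/2:ℝ) 1 := by
  have hmid : P (Ioo (1/4 : ℝ) (1/2)) = 0 := by
    have hIcc := ae_mem_Icc hP
    rw [ae_iff] at hIcc
    have hsub1 : S1 ⁻¹' (Ioo (1/4 : ℝ) (1/2)) ⊆ {x : ℝ | ¬ x ∈ Icc (0:ℝ) 1} := by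
      intro x hx
      simp only [mem_preimage, mem_Ioo, S1] at hx
      simp only [mem_setOf_eq, mem_Icc, not_and_or, not_le]
      right; linarith [hx.1]
    have hsub2 : S2 ⁻¹' (Ioo (1/4 : ℝ) (1/2)) ⊆ {x : ℝ | ¬ x ∈ Icc (0:ℝ) 1} := by
      intro x hx
      simp only [mem_preimage, mem_Ioo, S2] at hx
      simp only [mem_setOf_eq, mem_Icc, not_and_or, not_le]
      left; linarith [hx.2]
    rw [P_apply hP measurableSet_Ioo,
      measure_mono_null hsub1 hIcc, measure_mono_null hsub2 hIcc]
    simp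
  have h1 := ae_mem_Icc hP
  have h2 : ∀ᵐ x ∂P, ¬ x ∈ Ioo (1/4 : ℝ) (1/2) := by
    rw [ae_iff]; simp only [not_not]; exact hmid
  filter_upwards [h1, h2] with x hx hmx
  simp only [mem_Icc] at hx
  simp only [mem_Ioo, not_and_or, not_lt] at hmx
  by_cases hc : x ≤ 1/4
  · exact Or.inl ⟨hx.1, hc⟩
  · push_neg at hc
    rcases hmx with h | h
    · linarith
    · exact Or.inr ⟨h, hx.2⟩

lemma integrable_of_cont (hP : SelfSimilar P) {f : ℝ → ℝ} (hf : Continuous f) :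
    Integrable f P := by
  obtain ⟨C, hC⟩ := (isCompact_Icc (a := (0:ℝ)) (b := 1)).exists_bound_of_continuousOn
    hf.continuousOn
  exact (integrable_const C).mono' hf.aestronglyMeasurable
    ((ae_mem_Icc hP).mono fun x hx => hC x hx)

lemma integral_self_similar (hP : SelfSimilar P) {f : ℝ → ℝ} (hf : Continuous f) :
    ∫ x, f x ∂P = (1/4) * ∫ x, f (S1 x) ∂P + (3/4) * ∫ x, f (S2 x) ∂P := by
  have hInt : Integrable f P := integrable_of_cont hP hf
  rw [hP] at hInt
  obtain ⟨h1, h2⟩ := integrable_add_measure.mp hInt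
  conv_lhs => rw [hP]
  rw [integral_add_measure h1 h2, integral_smul_measure, integral_smul_measure,
    integral_map S1_meas.aemeasurable hf.aestronglyMeasurable,
    integral_map S2_meas.aemeasurable hf.aestronglyMeasurable,
    quarter_toReal, threequarter_toReal, smul_eq_mul, smul_eq_mul]

lemma not_mem_Icc_null (hP : SelfSimilar P) : P {x : ℝ | ¬ x ∈ Icc (0:ℝ) 1} = 0 :=
  ae_iff.mp (ae_mem_Icc hP)

lemma map_S1_J1 (hP : SelfSimilar P) : (P.map S1) ((Icc (0:ℝ) (1/4))ᶜ) = 0 := by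
  rw [Measure.map_apply S1_meas measurableSet_Icc.compl]
  refine measure_mono_null (fun x hx => ?_) (not_mem_Icc_null hP)
  simp only [mem_preimage, mem_compl_iff, mem_Icc, not_and_or, not_le, S1] at hx
  simp only [mem_setOf_eq, mem_Icc, not_and_or, not_le]
  rcases hx with h | h
  · left; linarith
  · right; linarith

lemma map_S2_J1 (hP : SelfSimilar P) : (P.map S2) (Icc (0:ℝ) (1/4)) = 0 := by
  rw [Measure.map_apply S2_meas measurableSet_Icc]
  refine measure_mono_null (fun x hx => ?_) (not_mem_Icc_null hP)
  simp only [mem_preimage, mem_Icc, S2] at hx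
  simp only [mem_setOf_eq, mem_Icc, not_and_or, not_le]
  left; linarith [hx.2]

lemma map_S2_J2 (hP : SelfSimilar P) : (P.map S2) ((Icc (1/2:ℝ) 1)ᶜ) = 0 := by
  rw [Measure.map_apply S2_meas measurableSet_Icc.compl]
  refine measure_mono_null (fun x hx => ?_) (not_mem_Icc_null hP)
  simp only [mem_preimage, mem_compl_iff, mem_Icc, not_and_or, not_le, S2] at hx
  simp only [mem_setOf_eq, mem_Icc, not_and_or, not_le]
  rcases hx with h | h
  · left; linarith
  · right; linarith

lemma map_S1_J2 (hP : SelfSimilar P) : (P.map S1) (Icc (1/2:ℝ) 1) = 0 := by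
  rw [Measure.map_apply S1_meas measurableSet_Icc]
  refine measure_mono_null (fun x hx => ?_) (not_mem_Icc_null hP)
  simp only [mem_preimage, mem_Icc, S1] at hx
  simp only [mem_setOf_eq, mem_Icc, not_and_or, not_le]
  right; linarith [hx.1]

lemma setIntegral_J1 (hP : SelfSimilar P) {f : ℝ → ℝ} (hf : Continuous f) :
    ∫ x in Icc (0:ℝ) (1/4), f x ∂P = (1/4) * ∫ x, f (S1 x) ∂P := by
  have hInt : Integrable f P := integrable_of_cont hP hf
  rw [hP] at hInt
  obtain ⟨h1, h2⟩ := integrable_add_measure.mp hInt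
  conv_lhs => rw [hP]
  rw [Measure.restrict_add, integral_add_measure h1.integrableOn h2.integrableOn,
    Measure.restrict_smul, Measure.restrict_smul,
    integral_smul_measure, integral_smul_measure,
    Measure.restrict_eq_self_of_ae_mem (by rw [ae_iff]; exact map_S1_J1 hP),
    Measure.restrict_eq_zero.mpr (map_S2_J1 hP), integral_zero_measure,
    integral_map S1_meas.aemeasurable hf.aestronglyMeasurable,
    quarter_toReal, smul_eq_mul, smul_eq_mul, mul_zero, add_zero]

lemma setIntegral_J2 (hP : SelfSimilar P) {f : ℝ → ℝ} (hf : Continuous f) :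
    ∫ x in Icc (1/2:ℝ) 1, f x ∂P = (3/4) * ∫ x, f (S2 x) ∂P := by
  have hInt : Integrable f P := integrable_of_cont hP hf
  rw [hP] at hInt
  obtain ⟨h1, h2⟩ := integrable_add_measure.mp hInt
  conv_lhs => rw [hP]
  rw [Measure.restrict_add, integral_add_measure h1.integrableOn h2.integrableOn,
    Measure.restrict_smul, Measure.restrict_smul,
    integral_smul_measure, integral_smul_measure,
    Measure.restrict_eq_zero.mpr (map_S1_J2 hP), integral_zero_measure,
    Measure.restrict_eq_self_of_ae_mem (by rw [ae_iff]; exact map_S2_J2 hP),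
    integral_map S2_meas.aemeasurable hf.aestronglyMeasurable,
    threequarter_toReal, smul_eq_mul, smul_eq_mul, mul_zero, zero_add]

lemma integral_split (hP : SelfSimilar P) {f : ℝ → ℝ} (hf : Continuous f) :
    ∫ x, f x ∂P = (∫ x in Icc (0:ℝ) (1/4), f x ∂P) + ∫ x in Icc (1/2:ℝ) 1, f x ∂P := by
  have hInt : Integrable f P := integrable_of_cont hP hf
  have hdisj : Disjoint (Icc (0:ℝ) (1/4)) (Icc (1/2:ℝ) 1) := by
    rw [Set.disjoint_left]
    intro a ha hb
    simp only [mem_Icc] at ha hb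
    linarith [ha.2, hb.1]
  rw [← setIntegral_union hdisj measurableSet_Icc hInt.integrableOn hInt.integrableOn]
  have : P.restrict (Icc (0:ℝ) (1/4) ∪ Icc (1/2:ℝ) 1) = P :=
    Measure.restrict_eq_self_of_ae_mem (ae_mem_union hP)
  rw [this]

def err (β : Finset ℝ) (x : ℝ) : ℝ := sInf ((fun a => (x - a) ^ 2) '' (β : Set ℝ))

lemma distortion_def (Q : Measure ℝ) (β : Finset ℝ) :
    distortion Q β = ∫ x, err β x ∂Q := rfl

lemma err_eq_inf' {β : Finset ℝ} (h : β.Nonempty) (x : ℝ) :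
    err β x = β.inf' h (fun a => (x - a) ^ 2) :=
  (Finset.inf'_eq_csInf_image β h _).symm

lemma err_le {β : Finset ℝ} {a : ℝ} (h : a ∈ β) (x : ℝ) : err β x ≤ (x - a) ^ 2 := by
  rw [err_eq_inf' ⟨a, h⟩ x]
  exact Finset.inf'_le _ h

lemma exists_err {β : Finset ℝ} (h : β.Nonempty) (x : ℝ) :
    ∃ a ∈ β, err β x = (x - a) ^ 2 := by
  rw [err_eq_inf' h x]
  obtain ⟨a, ha, he⟩ := Finset.exists_mem_eq_inf' h (fun a => (x - a) ^ 2)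
  exact ⟨a, ha, he⟩

lemma le_err {β : Finset ℝ} (h : β.Nonempty) {c x : ℝ} (H : ∀ a ∈ β, c ≤ (x - a) ^ 2) :
    c ≤ err β x := by
  rw [err_eq_inf' h x]
  exact Finset.le_inf' h _ H

lemma err_nonneg {β : Finset ℝ} (h : β.Nonempty) (x : ℝ) : 0 ≤ err β x :=
  le_err h (fun a _ => sq_nonneg _)

lemma err_anti {β γ : Finset ℝ} (hβγ : β ⊆ γ) (hβ : β.Nonempty) (x : ℝ) :
    err γ x ≤ err β x := by
  obtain ⟨a, ha, he⟩ := exists_err hβ x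
  rw [he]
  exact err_le (hβγ ha) x

lemma continuous_err {β : Finset ℝ} (h : β.Nonempty) : Continuous (err β) := by
  induction h using Finset.Nonempty.cons_induction with
  | singleton a =>
    have : err {a} = fun x => (x - a) ^ 2 := by
      funext x
      rw [err_eq_inf' (Finset.singleton_nonempty a) x, Finset.inf'_singleton]
    rw [this]; fun_prop
  | cons a s ha hs ih =>
    have : err (Finset.cons a s ha) = fun x => min ((x - a) ^ 2) (err s x) := by
      funext x
      rw [err_eq_inf' (Finset.cons_nonempty ha) x, Finset.inf'_cons,
        err_eq_inf' hs x]
    rw [this]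
    exact Continuous.min (by fun_prop) ih

lemma mul_inf' {c : ℝ} (hc : 0 ≤ c) {β : Finset ℝ} (h : β.Nonempty) (f : ℝ → ℝ) :
    c * β.inf' h f = β.inf' h (fun a => c * f a) := by
  induction h using Finset.Nonempty.cons_induction with
  | singleton a => simp
  | cons a s ha hs ih =>
    rw [Finset.inf'_cons hs, Finset.inf'_cons hs, ← ih,
      mul_min_of_nonneg _ _ hc]

lemma err_S1 {β : Finset ℝ} (h : β.Nonempty) (y : ℝ) :
    err β (S1 y) = (1/16) * err (β.image (fun b => 4 * b)) y := by
  rw [err_eq_inf' h, err_eq_inf' (h.image _), mul_inf' (by norm_num) _ _,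
    Finset.inf'_image]
  apply Finset.inf'_congr _ rfl
  intro a _
  simp only [Function.comp, S1]
  ring

lemma err_S2 {β : Finset ℝ} (h : β.Nonempty) (y : ℝ) :
    err β (S2 y) = (1/4) * err (β.image (fun b => 2 * b - 1)) y := by
  rw [err_eq_inf' h, err_eq_inf' (h.image _), mul_inf' (by norm_num) _ _,
    Finset.inf'_image]
  apply Finset.inf'_congr _ rfl
  intro a _
  simp only [Function.comp, S2]
  ring

lemma image_S1_collapse (γ : Finset ℝ) :
    (γ.image S1).image (fun b => 4 * b) = γ := by
  rw [Finset.image_image]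
  have : ((fun b => 4 * b) ∘ S1) = fun b : ℝ => b := by
    funext b; simp [Function.comp, S1]; ring
  rw [this, Finset.image_id']

lemma image_S2_collapse (γ : Finset ℝ) :
    (γ.image S2).image (fun b => 2 * b - 1) = γ := by
  rw [Finset.image_image]
  have : ((fun b => 2 * b - 1) ∘ S2) = fun b : ℝ => b := by
    funext b; simp [Function.comp, S2]; ring
  rw [this, Finset.image_id']

lemma distortion_nonneg {β : Finset ℝ} (h : β.Nonempty) (Q : Measure ℝ) :
    0 ≤ distortion Q β := by
  rw [distortion_def]
  exact integral_nonneg (fun x => err_nonneg h x)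

lemma qError_bddBelow (Q : Measure ℝ) (n : ℕ) :
    BddBelow {e | ∃ α : Finset ℝ, α.Nonempty ∧ α.card ≤ n ∧ e = distortion Q α} := by
  refine ⟨0, ?_⟩
  rintro e ⟨β, hβ, _, rfl⟩
  exact distortion_nonneg hβ Q

lemma qError_set_nonempty (Q : Measure ℝ) {n : ℕ} (hn : 1 ≤ n) :
    Set.Nonempty {e | ∃ α : Finset ℝ, α.Nonempty ∧ α.card ≤ n ∧ e = distortion Q α} :=
  ⟨distortion Q {0}, {0}, Finset.singleton_nonempty 0, by simpa using hn, rfl⟩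

lemma qError_le {β : Finset ℝ} (hβ : β.Nonempty) {n : ℕ} (hc : β.card ≤ n) (Q : Measure ℝ) :
    qError Q n ≤ distortion Q β :=
  csInf_le (qError_bddBelow Q n) ⟨β, hβ, hc, rfl⟩

lemma exists_near (Q : Measure ℝ) {m : ℕ} (hm : 1 ≤ m) {ε : ℝ} (hε : 0 < ε) :
    ∃ β : Finset ℝ, β.Nonempty ∧ β.card ≤ m ∧ distortion Q β < qError Q m + ε := by
  obtain ⟨e, ⟨β, hβ, hc, rfl⟩, hlt⟩ := Real.lt_sInf_add_pos (qError_set_nonempty Q hm) hε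
  exact ⟨β, hβ, hc, hlt⟩


-- moments
lemma integrable_id' (hP : SelfSimilar P) : Integrable (fun x : ℝ => x) P :=
  integrable_of_cont hP continuous_id

lemma integrable_sq' (hP : SelfSimilar P) : Integrable (fun x : ℝ => x ^ 2) P :=
  integrable_of_cont hP (by fun_prop)

lemma moment1 (hP : SelfSimilar P) : ∫ x, x ∂P = 2/3 := by
  have h := integral_self_similar hP (f := fun x => x) continuous_id
  have h1 : ∫ x, S1 x ∂P = (∫ x, x ∂P) / 4 := by
    simp only [S1]; rw [integral_div]
  have h2 : ∫ x, S2 x ∂P = (∫ x, x ∂P) / 2 + 1/2 := by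
    simp only [S2]
    rw [integral_add ((integrable_id' hP).div_const 2) (integrable_const _),
      integral_div, integral_const]
    simp
  rw [h1, h2] at h
  linarith

lemma moment2 (hP : SelfSimilar P) : ∫ x, x ^ 2 ∂P = 28/51 := by
  have h := integral_self_similar hP (f := fun x => x ^ 2) (by fun_prop)
  have e1 : ∀ x : ℝ, (S1 x) ^ 2 = x ^ 2 / 16 := fun x => by simp only [S1]; ring
  have e2 : ∀ x : ℝ, (S2 x) ^ 2 = (x ^ 2 / 4 + x / 2) + 1/4 := fun x => by
    simp only [S2]; ring
  have h1 : ∫ x, (S1 x) ^ 2 ∂P = (∫ x, x ^ 2 ∂P) / 16 := by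
    simp only [e1]; rw [integral_div]
  have h2 : ∫ x, (S2 x) ^ 2 ∂P = ((∫ x, x ^ 2 ∂P) / 4 + (∫ x, x ∂P) / 2) + 1/4 := by
    simp only [e2]
    have hadd : Integrable (fun x : ℝ => x ^ 2 / 4 + x / 2) P :=
      ((integrable_sq' hP).div_const 4).add ((integrable_id' hP).div_const 2)
    rw [integral_add hadd (integrable_const _),
      integral_add ((integrable_sq' hP).div_const 4) ((integrable_id' hP).div_const 2),
      integral_div, integral_div, integral_const]
    simp
  rw [h1, h2, moment1 hP] at h
  linarith

lemma integral_quad (hP : SelfSimilar P) (a b : ℝ) :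
    ∫ x, (a * x + b) ^ 2 ∂P = a^2 * (28/51) + 2*a*b*(2/3) + b^2 := by
  have hexp : ∀ x : ℝ, (a*x + b)^2 = (a^2 * x^2 + (2*a*b) * x) + b^2 := fun x => by ring
  simp only [hexp]
  have hadd : Integrable (fun x : ℝ => a ^ 2 * x ^ 2 + (2 * a * b) * x) P :=
    ((integrable_sq' hP).const_mul _).add ((integrable_id' hP).const_mul _)
  rw [integral_add hadd (integrable_const _),
    integral_add ((integrable_sq' hP).const_mul _) ((integrable_id' hP).const_mul _),
    integral_const_mul, integral_const_mul, integral_const, moment1 hP, moment2 hP]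
  simp [measure_univ]

lemma distortion_glue_le (hP : SelfSimilar P) {γ₁ γ₂ : Finset ℝ}
    (h₁ : γ₁.Nonempty) (h₂ : γ₂.Nonempty) :
    distortion P (γ₁.image S1 ∪ γ₂.image S2)
      ≤ (1/64) * distortion P γ₁ + (3/16) * distortion P γ₂ := by
  have hu : (γ₁.image S1 ∪ γ₂.image S2).Nonempty :=
    (h₁.image S1).mono Finset.subset_union_left
  rw [distortion_def, integral_split hP (continuous_err hu)]
  have hi1 : ∫ x in Icc (0:ℝ) (1/4), err (γ₁.image S1 ∪ γ₂.image S2) x ∂P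
      ≤ ∫ x in Icc (0:ℝ) (1/4), err (γ₁.image S1) x ∂P := by
    apply setIntegral_mono_on
      (integrable_of_cont hP (continuous_err hu)).integrableOn
      (integrable_of_cont hP (continuous_err (h₁.image S1))).integrableOn
      measurableSet_Icc
    exact fun x _ => err_anti Finset.subset_union_left (h₁.image S1) x
  have hi2 : ∫ x in Icc (1/2:ℝ) 1, err (γ₁.image S1 ∪ γ₂.image S2) x ∂P
      ≤ ∫ x in Icc (1/2:ℝ) 1, err (γ₂.image S2) x ∂P := by
    apply setIntegral_mono_on
      (integrable_of_cont hP (continuous_err hu)).integrableOn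
      (integrable_of_cont hP (continuous_err (h₂.image S2))).integrableOn
      measurableSet_Icc
    exact fun x _ => err_anti Finset.subset_union_right (h₂.image S2) x
  have he1 : ∫ x in Icc (0:ℝ) (1/4), err (γ₁.image S1) x ∂P
      = (1/64) * distortion P γ₁ := by
    rw [setIntegral_J1 hP (continuous_err (h₁.image S1))]
    have : ∀ y : ℝ, err (γ₁.image S1) (S1 y) = (1/16) * err γ₁ y := by
      intro y
      rw [err_S1 (h₁.image S1) y, image_S1_collapse]
    simp only [this]
    rw [integral_const_mul, distortion_def]
    ring
  have he2 : ∫ x in Icc (1/2:ℝ) 1, err (γ₂.image S2) x ∂P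
      = (3/16) * distortion P γ₂ := by
    rw [setIntegral_J2 hP (continuous_err (h₂.image S2))]
    have : ∀ y : ℝ, err (γ₂.image S2) (S2 y) = (1/4) * err γ₂ y := by
      intro y
      rw [err_S2 (h₂.image S2) y, image_S2_collapse]
    simp only [this]
    rw [integral_const_mul, distortion_def]
    ring
  linarith

lemma qError_le_13_612 (hP : SelfSimilar P) {n : ℕ} (hn : 2 ≤ n) :
    qError P n ≤ 13/612 := by
  set β : Finset ℝ := {1/6, 5/6} with hβ
  have hne : β.Nonempty := ⟨1/6, by simp [hβ]⟩
  have hcard : β.card ≤ n := by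
    have : β.card ≤ 2 := Finset.card_insert_le _ _ |>.trans (by simp)
    omega
  refine (qError_le hne hcard P).trans ?_
  rw [distortion_def, integral_self_similar hP (continuous_err hne)]
  have hb1 : ∫ x, err β (S1 x) ∂P ≤ ∫ x, (1/4 * x + (-(1/6))) ^ 2 ∂P := by
    apply integral_mono (integrable_of_cont hP ((continuous_err hne).comp S1_cont))
      (integrable_of_cont hP (by fun_prop))
    intro x
    have h6 : (1/6 : ℝ) ∈ β := by simp [hβ]
    have := err_le h6 (S1 x)
    have he : (S1 x - 1/6) ^ 2 = (1/4 * x + (-(1/6))) ^ 2 := by simp only [S1]; ring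
    exact le_of_le_of_eq this he
  have hb2 : ∫ x, err β (S2 x) ∂P ≤ ∫ x, (1/2 * x + (-(1/3))) ^ 2 ∂P := by
    apply integral_mono (integrable_of_cont hP ((continuous_err hne).comp S2_cont))
      (integrable_of_cont hP (by fun_prop))
    intro x
    have h6 : (5/6 : ℝ) ∈ β := by simp [hβ]
    have := err_le h6 (S2 x)
    have he : (S2 x - 5/6) ^ 2 = (1/2 * x + (-(1/3))) ^ 2 := by simp only [S2]; ring
    exact le_of_le_of_eq this he
  have hq1 := integral_quad hP (1/4) (-(1/6))
  have hq2 := integral_quad hP (1/2) (-(1/3))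
  rw [hq1] at hb1
  rw [hq2] at hb2
  nlinarith [hb1, hb2]

lemma setIntegralJ1_err (hP : SelfSimilar P) {β : Finset ℝ} (h : β.Nonempty) :
    ∫ x in Icc (0:ℝ) (1/4), err β x ∂P
      = (1/64) * distortion P (β.image (fun b => 4 * b)) := by
  rw [setIntegral_J1 hP (continuous_err h)]
  have : ∀ y : ℝ, err β (S1 y) = (1/16) * err (β.image (fun b => 4 * b)) y := err_S1 h
  simp only [this]
  rw [integral_const_mul, distortion_def]
  ring

lemma setIntegralJ2_err (hP : SelfSimilar P) {β : Finset ℝ} (h : β.Nonempty) :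
    ∫ x in Icc (1/2:ℝ) 1, err β x ∂P
      = (3/16) * distortion P (β.image (fun b => 2 * b - 1)) := by
  rw [setIntegral_J2 hP (continuous_err h)]
  have : ∀ y : ℝ, err β (S2 y) = (1/4) * err (β.image (fun b => 2 * b - 1)) y := err_S2 h
  simp only [this]
  rw [integral_const_mul, distortion_def]
  ring

/-- On `J₁`, the min over `β₁ ∪ β₂` equals the min over `β₁`. -/
lemma errJ1 {β₁ β₂ : Finset ℝ} (h₁ : β₁.Nonempty)
    (hs₁ : ∀ b ∈ β₁, b ∈ Icc (0:ℝ) (1/4)) (hs₂ : ∀ b ∈ β₂, b ∈ Icc (1/2:ℝ) 1) :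
    ∀ x ∈ Icc (0:ℝ) (1/4), err (β₁ ∪ β₂) x = err β₁ x := by
  intro x hx
  simp only [mem_Icc] at hx
  have hu : (β₁ ∪ β₂).Nonempty := h₁.mono Finset.subset_union_left
  apply le_antisymm (err_anti Finset.subset_union_left h₁ x)
  obtain ⟨a, ha, he⟩ := exists_err hu x
  rw [he]
  rcases Finset.mem_union.mp ha with h | h
  · exact err_le h x
  · obtain ⟨b, hb⟩ := h₁
    obtain ⟨hb1, hb2⟩ := hs₁ b hb
    obtain ⟨ha1, ha2⟩ := hs₂ a h
    calc err β₁ x ≤ (x - b) ^ 2 := err_le hb x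
      _ ≤ (x - a) ^ 2 := by nlinarith

lemma qError_anti {m n : ℕ} (hmn : m ≤ n) (hm : 1 ≤ m) (Q : Measure ℝ) :
    qError Q n ≤ qError Q m := by
  apply csInf_le_csInf (qError_bddBelow Q n) (qError_set_nonempty Q hm)
  rintro e ⟨β, hβ, hc, rfl⟩
  exact ⟨β, hβ, hc.trans hmn, rfl⟩

lemma qError_UB (hP : SelfSimilar P) {j k : ℕ} (hj : 1 ≤ j) (hk : 1 ≤ k) :
    qError P (j + k) ≤ (1/64) * qError P j + (3/16) * qError P k := by
  apply le_of_forall_pos_le_add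
  intro ε hε
  obtain ⟨γ₁, hγ₁ne, hγ₁c, hγ₁d⟩ := exists_near P hj hε
  obtain ⟨γ₂, hγ₂ne, hγ₂c, hγ₂d⟩ := exists_near P hk hε
  have hune : (γ₁.image S1 ∪ γ₂.image S2).Nonempty :=
    (hγ₁ne.image S1).mono Finset.subset_union_left
  have hcard : (γ₁.image S1 ∪ γ₂.image S2).card ≤ j + k := by
    calc (γ₁.image S1 ∪ γ₂.image S2).card
        ≤ (γ₁.image S1).card + (γ₂.image S2).card := Finset.card_union_le _ _
      _ ≤ γ₁.card + γ₂.card := add_le_add Finset.card_image_le Finset.card_image_le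
      _ ≤ j + k := add_le_add hγ₁c hγ₂c
  calc qError P (j + k) ≤ distortion P (γ₁.image S1 ∪ γ₂.image S2) :=
        qError_le hune hcard P
    _ ≤ (1/64) * distortion P γ₁ + (3/16) * distortion P γ₂ :=
        distortion_glue_le hP hγ₁ne hγ₂ne
    _ ≤ (1/64) * (qError P j + ε) + (3/16) * (qError P k + ε) := by
        apply add_le_add <;> apply mul_le_mul_of_nonneg_left (by linarith) (by norm_num)
    _ ≤ (1/64) * qError P j + (3/16) * qError P k + ε := by linarith

lemma distortion_singleton (hP : SelfSimilar P) (c : ℝ) :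
    distortion P {c} = 16/153 + (c - 2/3) ^ 2 := by
  have : ∀ x : ℝ, err {c} x = (1 * x + (-c)) ^ 2 := by
    intro x
    rw [err_eq_inf' (Finset.singleton_nonempty c) x, Finset.inf'_singleton]
    ring
  rw [distortion_def]
  simp only [this]
  rw [integral_quad hP]
  ring

lemma V1_eq (hP : SelfSimilar P) : qError P 1 = 16/153 := by
  apply le_antisymm
  · have h := qError_le (Finset.singleton_nonempty (2/3 : ℝ))
      (by norm_num : ({2/3} : Finset ℝ).card ≤ 1) P
    rw [distortion_singleton hP] at h
    norm_num at h
    exact h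
  · apply le_csInf (qError_set_nonempty P le_rfl)
    rintro e ⟨β, hβ, hc, rfl⟩
    obtain ⟨c, rfl⟩ := Finset.card_eq_one.mp (le_antisymm hc hβ.card_pos)
    rw [distortion_singleton hP]
    nlinarith [sq_nonneg (c - 2/3)]

def clamp (b : ℝ) : ℝ := max 0 (min b 1)

lemma clamp_mem (b : ℝ) : clamp b ∈ Icc (0:ℝ) 1 := by
  unfold clamp
  constructor
  · exact le_max_left _ _
  · apply max_le (by norm_num) (min_le_right _ _)

lemma clamp_le {x b : ℝ} (hx : x ∈ Icc (0:ℝ) 1) : (x - clamp b) ^ 2 ≤ (x - b) ^ 2 := by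
  obtain ⟨hx0, hx1⟩ := hx
  unfold clamp
  rcases le_or_gt b 0 with hb | hb
  · rw [min_eq_left (hb.trans (by norm_num)), max_eq_left hb]
    nlinarith
  rcases le_or_gt 1 b with hb1 | hb1
  · rw [min_eq_right hb1, max_eq_right (by norm_num)]
    nlinarith
  · rw [min_eq_left hb1.le, max_eq_right hb.le]

lemma clamp_lt {x b : ℝ} (hx : x ∈ Icc (0:ℝ) 1) (hb : b ∉ Icc (0:ℝ) 1) :
    (x - clamp b) ^ 2 < (x - b) ^ 2 := by
  obtain ⟨hx0, hx1⟩ := hx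
  simp only [mem_Icc, not_and_or, not_le] at hb
  unfold clamp
  rcases hb with hb | hb
  · rw [min_eq_left (hb.le.trans (by norm_num)), max_eq_left hb.le]
    nlinarith
  · rw [min_eq_right hb.le, max_eq_right (by norm_num)]
    nlinarith

lemma optimal_subset (hP : SelfSimilar P) {n : ℕ} {α : Finset ℝ} (hne : α.Nonempty)
    (hcard : α.card ≤ n) (hopt : distortion P α = qError P n) :
    (α.filter (fun a => a ∈ Icc (0:ℝ) 1)).Nonempty ∧
    distortion P (α.filter (fun a => a ∈ Icc (0:ℝ) 1)) = qError P n := by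
  classical
  set α' := α.image clamp with hα'
  have hα'ne : α'.Nonempty := hne.image clamp
  have hα'card : α'.card ≤ n := Finset.card_image_le.trans hcard
  set αin := α.filter (fun a => a ∈ Icc (0:ℝ) 1) with hαin
  have hanti : ∀ x ∈ Icc (0:ℝ) 1, err α' x ≤ err α x := by
    intro x hx
    obtain ⟨a, ha, he⟩ := exists_err hne x
    rw [he]
    exact (err_le (Finset.mem_image_of_mem clamp ha) x).trans (clamp_le hx)
  have hd'le : distortion P α' ≤ distortion P α := by
    rw [distortion_def, distortion_def]
    apply integral_mono_ae (integrable_of_cont hP (continuous_err hα'ne))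
      (integrable_of_cont hP (continuous_err hne))
    exact (ae_mem_Icc hP).mono fun x hx => hanti x hx
  have hd' : distortion P α' = qError P n :=
    le_antisymm (hopt ▸ hd'le) (qError_le hα'ne hα'card P)
  have e1 : ∫ x, err α x ∂P = qError P n := by rw [← distortion_def]; exact hopt
  have e2 : ∫ x, err α' x ∂P = qError P n := by rw [← distortion_def]; exact hd'
  have hzero : ∫ x, (err α x - err α' x) ∂P = 0 := by
    rw [integral_sub (integrable_of_cont hP (continuous_err hne))
      (integrable_of_cont hP (continuous_err hα'ne)), e1, e2, sub_self]
  have hae : ∀ᵐ x ∂P, err α x - err α' x = 0 := by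
    have h0 : 0 ≤ᵐ[P] fun x => err α x - err α' x :=
      (ae_mem_Icc hP).mono fun x hx => sub_nonneg.mpr (hanti x hx)
    have := (integral_eq_zero_iff_of_nonneg_ae h0
      ((integrable_of_cont hP (continuous_err hne)).sub
        (integrable_of_cont hP (continuous_err hα'ne)))).mp hzero
    filter_upwards [this] with x hx
    exact hx
  have hkey : ∀ᵐ x ∂P, err α x = err αin x ∧ ∃ a ∈ αin, err α x = (x - a) ^ 2 := by
    filter_upwards [ae_mem_Icc hP, hae] with x hx heq
    obtain ⟨a, ha, he⟩ := exists_err hne x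
    have hain : a ∈ Icc (0:ℝ) 1 := by
      by_contra hout
      have h1 : err α' x ≤ (x - clamp a) ^ 2 :=
        err_le (Finset.mem_image_of_mem clamp ha) x
      have h2 : (x - clamp a) ^ 2 < (x - a) ^ 2 := clamp_lt hx hout
      have : err α x - err α' x > 0 := by
        rw [he]; linarith
      linarith
    have hmem : a ∈ αin := Finset.mem_filter.mpr ⟨ha, hain⟩
    have h3 : err αin x ≤ err α x := by
      rw [he]; exact err_le hmem x
    have h4 : err α x ≤ err αin x := err_anti (Finset.filter_subset _ _) ⟨a, hmem⟩ x
    exact ⟨le_antisymm h4 h3, a, hmem, he⟩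
  have : Filter.NeBot (MeasureTheory.ae P) := ae_neBot.mpr (IsProbabilityMeasure.ne_zero P)
  obtain ⟨x₀, _, a₀, ha₀, _⟩ := hkey.exists
  have hinne : αin.Nonempty := ⟨a₀, ha₀⟩
  refine ⟨hinne, ?_⟩
  rw [← hopt, distortion_def, distortion_def]
  exact integral_congr_ae (hkey.mono fun x hx => hx.1.symm)

/-- `psi t = ∫ max (t - y) 0 dP`. -/
def psi (P : Measure ℝ) (t : ℝ) : ℝ := ∫ y, max (t - y) 0 ∂P

lemma psi_cont_integrand (t : ℝ) : Continuous (fun y : ℝ => max (t - y) 0) := by fun_prop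

lemma psi_nonneg (t : ℝ) : 0 ≤ psi P t :=
  integral_nonneg (fun y => le_max_right _ _)

lemma psi_self_similar (hP : SelfSimilar P) (t : ℝ) :
    psi P t = (1/16) * psi P (4*t) + (3/8) * psi P (2*t-1) := by
  have h := integral_self_similar hP (f := fun y => max (t - y) 0) (psi_cont_integrand t)
  have e1 : ∀ x : ℝ, max (t - S1 x) 0 = (1/4) * max (4*t - x) 0 := by
    intro x
    rw [show t - S1 x = (1/4) * (4*t - x) from by simp only [S1]; ring,
      mul_max_of_nonneg _ _ (by norm_num : (0:ℝ) ≤ 1/4), mul_zero]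
  have e2 : ∀ x : ℝ, max (t - S2 x) 0 = (1/2) * max (2*t-1 - x) 0 := by
    intro x
    rw [show t - S2 x = (1/2) * (2*t-1 - x) from by simp only [S2]; ring,
      mul_max_of_nonneg _ _ (by norm_num : (0:ℝ) ≤ 1/2), mul_zero]
  simp only [e1, e2] at h
  rw [integral_const_mul, integral_const_mul] at h
  unfold psi
  rw [h]
  ring

lemma psi_of_nonpos (hP : SelfSimilar P) {t : ℝ} (ht : t ≤ 0) : psi P t = 0 := by
  unfold psi
  apply integral_eq_zero_of_ae
  filter_upwards [ae_mem_Icc hP] with y hy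
  exact max_eq_right (sub_nonpos.mpr (ht.trans hy.1))

lemma psi_of_ge_one (hP : SelfSimilar P) {t : ℝ} (ht : 1 ≤ t) : psi P t = t - 2/3 := by
  unfold psi
  have : ∫ y, max (t - y) 0 ∂P = ∫ y, (t - y) ∂P := by
    apply integral_congr_ae
    filter_upwards [ae_mem_Icc hP] with y hy
    obtain ⟨_, h1⟩ := hy
    exact max_eq_left (by linarith)
  rw [this, integral_sub (integrable_const t) (integrable_id' hP), integral_const,
    moment1 hP]
  simp [measure_univ]

lemma psi_le_self (hP : SelfSimilar P) {t : ℝ} (ht : t ∈ Icc (0:ℝ) 1) : psi P t ≤ t := by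
  unfold psi
  calc ∫ y, max (t - y) 0 ∂P ≤ ∫ _y, t ∂P := by
        apply integral_mono_ae (integrable_of_cont hP (psi_cont_integrand t))
          (integrable_const t)
        filter_upwards [ae_mem_Icc hP] with y hy
        exact max_le (by linarith [hy.1]) ht.1
    _ = t := by simp [measure_univ]

/-- The key quadratic bound on `psi`. -/
lemma psi_le (hP : SelfSimilar P) {t : ℝ} (ht : t ∈ Icc (0:ℝ) 1) :
    psi P t ≤ (3/8) * t^2 := by
  set g : ℝ → ℝ := fun t => psi P t - (3/8) * t^2 with hg
  suffices hgs : g t ≤ 0 by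
    have h2 : psi P t - (3/8) * t^2 ≤ 0 := hgs
    linarith
  have hbdd : BddAbove (g '' Icc (0:ℝ) 1) := by
    refine ⟨1, ?_⟩
    rintro _ ⟨s, hs, rfl⟩
    have h1 := psi_le_self hP hs
    show psi P s - (3/8) * s^2 ≤ 1
    nlinarith [hs.1, hs.2]
  have hne : (g '' Icc (0:ℝ) 1).Nonempty := ⟨g 0, 0, by norm_num, rfl⟩
  set S := sSup (g '' Icc (0:ℝ) 1) with hS
  have hleS : ∀ s ∈ Icc (0:ℝ) 1, g s ≤ S := fun s hs => le_csSup hbdd ⟨s, hs, rfl⟩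
  -- the three regime facts
  have fact1 : ∀ s ∈ Icc (0:ℝ) (1/4), g s = (1/16) * g (4*s) := by
    intro s hs
    obtain ⟨h0, h4⟩ := hs
    have := psi_self_similar hP s
    have hz : psi P (2*s-1) = 0 := psi_of_nonpos hP (by linarith)
    show psi P s - (3/8) * s^2 = (1/16) * (psi P (4*s) - (3/8) * (4*s)^2)
    rw [this, hz]
    ring
  have fact2 : ∀ s ∈ Icc (1/4:ℝ) (1/2), g s ≤ 0 := by
    intro s hs
    obtain ⟨h0, h4⟩ := hs
    have := psi_self_similar hP s
    have hz : psi P (2*s-1) = 0 := psi_of_nonpos hP (by linarith)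
    have h1 : psi P (4*s) = 4*s - 2/3 := psi_of_ge_one hP (by linarith)
    show psi P s - (3/8) * s^2 ≤ 0
    rw [this, hz, h1]
    nlinarith [sq_nonneg (s - 1/3)]
  have fact3 : ∀ s ∈ Icc (1/2:ℝ) 1, g s ≤ (3/8) * g (2*s-1) := by
    intro s hs
    obtain ⟨h0, h4⟩ := hs
    have := psi_self_similar hP s
    have h1 : psi P (4*s) = 4*s - 2/3 := psi_of_ge_one hP (by linarith)
    show psi P s - (3/8) * s^2 ≤ (3/8) * (psi P (2*s-1) - (3/8) * (2*s-1)^2)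
    rw [this, h1]
    nlinarith [mul_nonneg (by linarith : (0:ℝ) ≤ s - 1/2) (by linarith : (0:ℝ) ≤ 1 - s)]
  clear_value g S
  have hmain : ∀ s ∈ Icc (0:ℝ) 1, g s ≤ (3/8) * max S 0 := by
    intro s hs
    obtain ⟨h0, h1⟩ := hs
    have hmax0 : (0:ℝ) ≤ max S 0 := le_max_right _ _
    have hmaxS : S ≤ max S 0 := le_max_left _ _
    rcases le_or_gt s (1/4) with hc1 | hc1
    · rw [fact1 s ⟨h0, hc1⟩]
      have h4s : g (4*s) ≤ S := hleS (4*s) ⟨by linarith, by linarith⟩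
      have := mul_le_mul_of_nonneg_left h4s (by norm_num : (0:ℝ) ≤ 1/16)
      have h2 : (1/16) * S ≤ (3/8) * max S 0 := by
        rcases le_or_gt 0 S with hS0 | hS0
        · nlinarith
        · nlinarith
      linarith
    rcases le_or_gt s (1/2) with hc2 | hc2
    · have := fact2 s ⟨hc1.le, hc2⟩
      nlinarith
    · have h2s : g (2*s-1) ≤ S := hleS (2*s-1) ⟨by linarith, by linarith⟩
      have h3 := fact3 s ⟨hc2.le, h1⟩
      have := mul_le_mul_of_nonneg_left h2s (by norm_num : (0:ℝ) ≤ 3/8)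
      nlinarith
  have hSle : S ≤ (3/8) * max S 0 := by
    conv_lhs => rw [hS]
    exact csSup_le hne (by rintro _ ⟨s, hs, rfl⟩; exact hmain s hs)
  have hS0 : S ≤ 0 := by
    by_contra hpos
    push_neg at hpos
    rw [max_eq_left hpos.le] at hSle
    nlinarith
  exact (hleS t ht).trans hS0

lemma err_singleton (c x : ℝ) : err {c} x = (x - c) ^ 2 := by
  rw [err_eq_inf' (Finset.singleton_nonempty c) x, Finset.inf'_singleton]

lemma err_pair (a b x : ℝ) : err ({a} ∪ {b}) x = min ((x - a) ^ 2) ((x - b) ^ 2) := by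
  rw [← Finset.insert_eq, err_eq_inf' (Finset.insert_nonempty a {b}) x,
    Finset.inf'_insert (Finset.singleton_nonempty b), Finset.inf'_singleton]

set_option maxHeartbeats 2000000 in
lemma voronoi (hP : SelfSimilar P) {n : ℕ} (hn : 2 ≤ n) {α₁ α₂ : Finset ℝ}
    (h₁ : α₁.Nonempty) (h₂ : α₂.Nonempty)
    (hs₁ : ∀ b ∈ α₁, b ∈ Icc (0:ℝ) (1/4)) (hs₂ : ∀ b ∈ α₂, b ∈ Icc (1/2:ℝ) 1)
    (hcard : α₁.card + α₂.card ≤ n)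
    (hopt : distortion P (α₁ ∪ α₂) = qError P n) :
    ∀ x ∈ Icc (1/2:ℝ) 1, err (α₁ ∪ α₂) x = err α₂ x := by
  by_contra hcon
  push_neg at hcon
  obtain ⟨x, hx, hnex⟩ := hcon
  obtain ⟨hx5, hx1⟩ := mem_Icc.mp hx
  have hune : (α₁ ∪ α₂).Nonempty := h₁.mono Finset.subset_union_left
  have hxlt : err (α₁ ∪ α₂) x < err α₂ x :=
    lt_of_le_of_ne (err_anti Finset.subset_union_right h₂ x) hnex
  obtain ⟨c, hc, hce⟩ := exists_err hune x
  have hcA1 : c ∈ α₁ := by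
    rcases Finset.mem_union.mp hc with h | h
    · exact h
    · exfalso
      have : err α₂ x ≤ (x - c) ^ 2 := err_le h x
      rw [← hce] at this
      exact absurd hxlt (not_lt.mpr this)
  obtain ⟨hc0, hc4⟩ := mem_Icc.mp (hs₁ c hcA1)
  have hb34 : ∀ b ∈ α₂, 3/4 < b := by
    intro b hb
    have h1 : err (α₁ ∪ α₂) x < (x - b) ^ 2 := hxlt.trans_le (err_le hb x)
    rw [hce] at h1
    obtain ⟨hb5, hb1⟩ := mem_Icc.mp (hs₂ b hb)
    by_contra hble
    push_neg at hble
    have key : 0 ≤ (b - c) * (2*x - b - c) :=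
      mul_nonneg (by linarith) (by linarith)
    nlinarith
  have hj1 : 1 ≤ α₁.card := h₁.card_pos
  have hk1 : 1 ≤ α₂.card := h₂.card_pos
  have hnj1 : 1 ≤ n - α₁.card := by omega
  have hknj : α₂.card ≤ n - α₁.card := by omega
  -- the split of qError P n
  have hsplit : qError P n = (1/64) * distortion P (α₁.image (fun b => 4*b))
      + ∫ z in Icc (1/2:ℝ) 1, err (α₁ ∪ α₂) z ∂P := by
    rw [← hopt, distortion_def, integral_split hP (continuous_err hune),
      setIntegral_congr_fun measurableSet_Icc (errJ1 h₁ hs₁ hs₂),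
      setIntegralJ1_err hP h₁]
  have hAB : ∫ z in Icc (1/2:ℝ) 1, err (α₁ ∪ α₂) z ∂P
      = (3/16) * distortion P ((α₁ ∪ α₂).image (fun b => 2*b-1)) :=
    setIntegralJ2_err hP hune
  set B := distortion P ((α₁ ∪ α₂).image (fun b => 2*b-1)) with hB
  have hUB : qError P n ≤ (1/64) * qError P α₁.card + (3/16) * qError P (n - α₁.card) := by
    have := qError_UB hP hj1 hnj1
    rwa [show α₁.card + (n - α₁.card) = n by omega] at this
  have hd1 : qError P α₁.card ≤ distortion P (α₁.image (fun b => 4*b)) := by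
    apply qError_le (h₁.image _) ?_ P
    rw [Finset.card_image_of_injective _ (mul_right_injective₀ (by norm_num : (4:ℝ) ≠ 0))]
  have hBle : B ≤ qError P (n - α₁.card) := by
    rw [hAB] at hsplit
    linarith
  -- lower bound on B
  have hpne : ((α₁ ∪ α₂).image (fun b => 2*b-1)).Nonempty := hune.image _
  have hBsplit : B = (∫ y in Icc (0:ℝ) (1/4), err ((α₁ ∪ α₂).image (fun b => 2*b-1)) y ∂P)
      + ∫ y in Icc (1/2:ℝ) 1, err ((α₁ ∪ α₂).image (fun b => 2*b-1)) y ∂P := by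
    rw [hB, distortion_def, integral_split hP (continuous_err hpne)]
  have hB1 : ∫ y in Icc (0:ℝ) (1/4), ((1:ℝ)/2 - y)^2 ∂P
      ≤ ∫ y in Icc (0:ℝ) (1/4), err ((α₁ ∪ α₂).image (fun b => 2*b-1)) y ∂P := by
    apply setIntegral_mono_on (integrable_of_cont hP (by fun_prop)).integrableOn
      (integrable_of_cont hP (continuous_err hpne)).integrableOn measurableSet_Icc
    intro y hy
    obtain ⟨hy0, hy4⟩ := mem_Icc.mp hy
    apply le_err hpne
    intro p hp
    obtain ⟨cc, hcc, rfl⟩ := Finset.mem_image.mp hp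
    rcases Finset.mem_union.mp hcc with h | h
    · obtain ⟨hh0, hh4⟩ := mem_Icc.mp (hs₁ cc h)
      nlinarith
    · have h34 := hb34 cc h
      nlinarith
  have hB1val : ∫ y in Icc (0:ℝ) (1/4), ((1:ℝ)/2 - y)^2 ∂P = 1/34 := by
    rw [setIntegral_J1 hP (by fun_prop)]
    have he : ∀ z : ℝ, ((1:ℝ)/2 - S1 z)^2 = ((-(1/4))*z + 1/2)^2 := fun z => by
      simp only [S1]; ring
    simp only [he]
    rw [integral_quad hP]
    norm_num
  have hB2 : ∫ y in Icc (1/2:ℝ) 1, err (α₂.image (fun b => 2*b-1)) y ∂P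
      ≤ ∫ y in Icc (1/2:ℝ) 1, err ((α₁ ∪ α₂).image (fun b => 2*b-1)) y ∂P := by
    apply setIntegral_mono_on (integrable_of_cont hP (continuous_err (h₂.image _))).integrableOn
      (integrable_of_cont hP (continuous_err hpne)).integrableOn measurableSet_Icc
    intro y hy
    obtain ⟨hy5, hy1⟩ := mem_Icc.mp hy
    obtain ⟨p, hp, hpe⟩ := exists_err hpne y
    rw [hpe]
    obtain ⟨cc, hcc, rfl⟩ := Finset.mem_image.mp hp
    rcases Finset.mem_union.mp hcc with h | h
    · obtain ⟨b0, hb0⟩ := h₂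
      have h20 := hb34 b0 hb0
      obtain ⟨hb05, hb01⟩ := mem_Icc.mp (hs₂ b0 hb0)
      have hle : err (α₂.image (fun b => 2*b-1)) y ≤ (y - (2*b0-1))^2 :=
        err_le (Finset.mem_image_of_mem _ hb0) y
      obtain ⟨hh0, hh4⟩ := mem_Icc.mp (hs₁ cc h)
      nlinarith
    · exact err_le (Finset.mem_image_of_mem _ h) y
  have hB2val : ∫ y in Icc (1/2:ℝ) 1, err (α₂.image (fun b => 2*b-1)) y ∂P
      = (3/16) * distortion P ((α₂.image (fun b => 2*b-1)).image (fun b => 2*b-1)) :=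
    setIntegralJ2_err hP (h₂.image _)
  have hδ : qError P α₂.card
      ≤ distortion P ((α₂.image (fun b => 2*b-1)).image (fun b => 2*b-1)) :=
    qError_le ((h₂.image _).image _)
      (Finset.card_image_le.trans Finset.card_image_le) P
  have hVknj : qError P (n - α₁.card) ≤ qError P α₂.card := qError_anti hknj hk1 P
  have hBlow : 1/34 + (3/16) * qError P α₂.card ≤ B := by
    rw [hBsplit]
    linarith
  have hVk : 8/221 ≤ qError P α₂.card := by
    have : qError P α₂.card ≥ B := le_trans hBle hVknj
    linarith
  have hkeq : α₂.card = 1 := by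
    by_contra hk2
    have h2k : 2 ≤ α₂.card := by omega
    have := qError_le_13_612 hP h2k
    linarith
  have hV1 := V1_eq hP
  have hBlow' : 5/102 ≤ B := by
    rw [hkeq, hV1] at hBlow
    linarith
  have hnjeq : n - α₁.card = 1 := by
    by_contra h2'
    have h2'' : 2 ≤ n - α₁.card := by omega
    have := qError_le_13_612 hP h2''
    linarith
  have hneq : n = 2 := by
    by_contra hn3
    have h3 : 3 ≤ n := by omega
    have hV3 : qError P 3 ≤ 55/9792 := by
      have h32 := qError_UB hP (le_refl 1) (by norm_num : 1 ≤ 2)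
      have hV2 := qError_le_13_612 hP (le_refl 2)
      rw [hV1] at h32
      norm_num at h32 ⊢
      linarith
    have hVn3 : qError P n ≤ qError P 3 := qError_anti h3 (by norm_num) P
    have hge : (3/16) * B ≤ qError P n := by
      rw [hsplit, hAB]
      have := distortion_nonneg (h₁.image (fun b => 4*b)) P
      linarith
    linarith
  have hjeq : α₁.card = 1 := by omega
  -- now n = 2, α₁ = {a}, α₂ = {b}
  obtain ⟨a, ha⟩ := Finset.card_eq_one.mp hjeq
  obtain ⟨b, hb⟩ := Finset.card_eq_one.mp hkeq
  have haI : a ∈ Icc (0:ℝ) (1/4) := hs₁ a (by rw [ha]; exact Finset.mem_singleton_self a)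
  have hbI : b ∈ Icc (1/2:ℝ) 1 := hs₂ b (by rw [hb]; exact Finset.mem_singleton_self b)
  obtain ⟨ha0, ha4⟩ := mem_Icc.mp haI
  obtain ⟨hb5, hb1⟩ := mem_Icc.mp hbI
  have hceq : c = a := by
    rw [ha] at hcA1
    exact Finset.mem_singleton.mp hcA1
  have hxe : err (α₁ ∪ α₂) x = (x - a)^2 := by rw [hce, hceq]
  have hxb : err α₂ x = (x - b)^2 := by rw [hb, err_singleton]
  have hu_pos : 0 < a + b - 1 := by
    rw [hxe, hxb] at hxlt
    nlinarith
  have hu4 : a + b - 1 ≤ 1/4 := by linarith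
  -- pointwise min formula
  have hmin : ∀ z : ℝ, err (α₁ ∪ α₂) z
      = (z - b)^2 - (b - a) * max (a + b - 2*z) 0 := by
    intro z
    rw [ha, hb, err_pair]
    rcases le_total (a + b) (2*z) with h | h
    · rw [max_eq_right (by linarith), min_eq_right (by nlinarith)]
      ring
    · rw [max_eq_left (by linarith), min_eq_left (by nlinarith)]
      ring
  have hA2 : ∫ z in Icc (1/2:ℝ) 1, err (α₁ ∪ α₂) z ∂P
      = (∫ z in Icc (1/2:ℝ) 1, (z - b)^2 ∂P)
        - (b - a) * ∫ z in Icc (1/2:ℝ) 1, max (a + b - 2*z) 0 ∂P := by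
    simp only [hmin]
    rw [integral_sub ((integrable_of_cont hP (by fun_prop)).integrableOn)
      ((integrable_of_cont hP (by fun_prop : Continuous fun z : ℝ =>
        (b - a) * max (a + b - 2*z) 0)).integrableOn), integral_const_mul]
  have hq2 : ∫ z in Icc (1/2:ℝ) 1, (z - b)^2 ∂P
      = (3/4) * ((1/2)^2*(28/51) + 2*(1/2)*(1/2-b)*(2/3) + (1/2-b)^2) := by
    rw [setIntegral_J2 hP (by fun_prop)]
    have he : ∀ y : ℝ, (S2 y - b)^2 = ((1/2)*y + (1/2-b))^2 := fun y => by
      simp only [S2]; ring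
    simp only [he]
    rw [integral_quad hP]
  have hq3 : ∫ z in Icc (1/2:ℝ) 1, max (a + b - 2*z) 0 ∂P = (3/4) * psi P (a+b-1) := by
    rw [setIntegral_J2 hP (by fun_prop)]
    have he : ∀ y : ℝ, max (a + b - 2 * S2 y) 0 = max (a+b-1 - y) 0 := fun y => by
      congr 1
      simp only [S2]; ring
    simp only [he]
    rfl
  have hd1' : distortion P (α₁.image (fun b => 4*b)) = 16/153 + (4*a - 2/3)^2 := by
    rw [ha, Finset.image_singleton, distortion_singleton hP]
  have hpsi_le := psi_le hP (⟨hu_pos.le, by linarith⟩ : a+b-1 ∈ Icc (0:ℝ) 1)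
  have hpsi_nn : 0 ≤ psi P (a+b-1) := psi_nonneg _
  have hVle : qError P n ≤ 13/612 := qError_le_13_612 hP hn
  -- assemble the contradiction
  have hFeq : qError P n = (1/64) * (16/153 + (4*a - 2/3)^2)
      + ((3/4) * ((1/2)^2*(28/51) + 2*(1/2)*(1/2-b)*(2/3) + (1/2-b)^2)
        - (b - a) * ((3/4) * psi P (a+b-1))) := by
    rw [hsplit, hd1', hA2, hq2, hq3]
  have hba : (0:ℝ) ≤ b - a := by linarith
  have hpsi_term : (b - a) * ((3/4) * psi P (a+b-1)) ≤ (9/32) * (b-a) * (a+b-1)^2 := by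
    have := mul_le_mul_of_nonneg_left hpsi_le hba
    linarith
  have h9 : 0 < (a+b-1)^3 * (1 - (9/16)*(a+b-1)) :=
    mul_pos (pow_pos hu_pos 3) (by linarith)
  have hid : 16*((1/4)*(a-1/6)^2 + (3/4)*(b-5/6)^2 - (9/32)*(b-a)*(a+b-1)^2)
      = (2*(b-a-2/3) + (a+b-1) - (9/8)*(a+b-1)^2)^2
        + (9/4)*((a+b-1)^3*(1 - (9/16)*(a+b-1))) := by
    ring
  have hq : (9/32) * (b-a) * (a+b-1)^2
      < (1/4)*(a-1/6)^2 + (3/4)*(b-5/6)^2 := by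
    have hsq := sq_nonneg (2*(b-a-2/3) + (a+b-1) - (9/8)*(a+b-1)^2)
    linarith
  have e₁ : (1/64) * (16/153 + (4*a - 2/3)^2) = 1/612 + (1/4)*(a - 1/6)^2 := by ring
  have e₂ : (3/4) * ((1/2)^2*(28/51) + 2*(1/2)*(1/2-b)*(2/3) + (1/2-b)^2)
      = 1/51 + (3/4)*(b - 5/6)^2 := by ring
  rw [e₁, e₂] at hFeq
  linarith

lemma parts_nonempty (hP : SelfSimilar P) {n : ℕ} (hn : 2 ≤ n) {α₁ α₂ : Finset ℝ}
    (hs₁ : ∀ b ∈ α₁, b ∈ Icc (0:ℝ) (1/4)) (hs₂ : ∀ b ∈ α₂, b ∈ Icc (1/2:ℝ) 1)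
    (hu : (α₁ ∪ α₂).Nonempty)
    (hopt : distortion P (α₁ ∪ α₂) = qError P n) :
    α₁.Nonempty ∧ α₂.Nonempty := by
  have hVle : qError P n ≤ 13/612 := qError_le_13_612 hP hn
  constructor
  · rw [Finset.nonempty_iff_ne_empty]
    intro hcon
    rw [hcon, Finset.empty_union] at hopt hu
    have hlow : ∫ y in Icc (0:ℝ) (1/4), ((1:ℝ)/2 - y)^2 ∂P
        ≤ ∫ y in Icc (0:ℝ) (1/4), err α₂ y ∂P := by
      apply setIntegral_mono_on (integrable_of_cont hP (by fun_prop)).integrableOn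
        (integrable_of_cont hP (continuous_err hu)).integrableOn measurableSet_Icc
      intro y hy
      obtain ⟨hy0, hy4⟩ := mem_Icc.mp hy
      apply le_err hu
      intro p hp
      obtain ⟨hp5, hp1⟩ := mem_Icc.mp (hs₂ p hp)
      nlinarith
    have hval : ∫ y in Icc (0:ℝ) (1/4), ((1:ℝ)/2 - y)^2 ∂P = 1/34 := by
      rw [setIntegral_J1 hP (by fun_prop)]
      have he : ∀ z : ℝ, ((1:ℝ)/2 - S1 z)^2 = ((-(1/4))*z + 1/2)^2 := fun z => by
        simp only [S1]; ring
      simp only [he]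
      rw [integral_quad hP]
      norm_num
    have hJ2nn : 0 ≤ ∫ y in Icc (1/2:ℝ) 1, err α₂ y ∂P :=
      setIntegral_nonneg measurableSet_Icc fun y _ => err_nonneg hu y
    have : qError P n ≥ 1/34 := by
      rw [← hopt, distortion_def, integral_split hP (continuous_err hu)]
      linarith
    linarith
  · rw [Finset.nonempty_iff_ne_empty]
    intro hcon
    rw [hcon, Finset.union_empty] at hopt hu
    have hlow : ∫ y in Icc (1/2:ℝ) 1, (y - (1:ℝ)/4)^2 ∂P
        ≤ ∫ y in Icc (1/2:ℝ) 1, err α₁ y ∂P := by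
      apply setIntegral_mono_on (integrable_of_cont hP (by fun_prop)).integrableOn
        (integrable_of_cont hP (continuous_err hu)).integrableOn measurableSet_Icc
      intro y hy
      obtain ⟨hy5, hy1⟩ := mem_Icc.mp hy
      apply le_err hu
      intro p hp
      obtain ⟨hp0, hp4⟩ := mem_Icc.mp (hs₁ p hp)
      nlinarith
    have hval : ∫ y in Icc (1/2:ℝ) 1, (y - (1:ℝ)/4)^2 ∂P = 299/1088 := by
      rw [setIntegral_J2 hP (by fun_prop)]
      have he : ∀ z : ℝ, (S2 z - (1:ℝ)/4)^2 = ((1/2)*z + 1/4)^2 := fun z => by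
        simp only [S2]; ring
      simp only [he]
      rw [integral_quad hP]
      norm_num
    have hJ1nn : 0 ≤ ∫ y in Icc (0:ℝ) (1/4), err α₁ y ∂P :=
      setIntegral_nonneg measurableSet_Icc fun y _ => err_nonneg hu y
    have : qError P n ≥ 299/1088 := by
      rw [← hopt, distortion_def, integral_split hP (continuous_err hu)]
      linarith
    linarith

theorem stmt_13 (P : Measure ℝ) [IsProbabilityMeasure P] (hP : SelfSimilar P)
    (n : ℕ) (hn : 2 ≤ n) (α : Finset ℝ) (hα : IsOptimal P n α)
    (hgap : ∀ a ∈ α, a ∉ Set.Ioo (1 / 4 : ℝ) (1 / 2))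
    (α₁ α₂ : Finset ℝ) (hα₁ : α₁ = α.filter (fun a => a ∈ J [0]))
    (hα₂ : α₂ = α.filter (fun a => a ∈ J [1])) :
    IsOptimal P α₁.card (α₁.image (fun x => 4 * x)) ∧
    IsOptimal P (n - α₁.card) (α₂.image (fun x => 2 * x - 1)) ∧
    qError P n = (1 / 64) * qError P α₁.card + (3 / 16) * qError P (n - α₁.card) := by
  classical
  obtain ⟨hαne, hαcard, hαopt⟩ := hα
  simp only [J0_eq] at hα₁
  simp only [J1_eq] at hα₂
  obtain ⟨hinne, hinopt⟩ := optimal_subset hP hαne hαcard hαopt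
  have hsplit_set : α.filter (fun a => a ∈ Icc (0:ℝ) 1) = α₁ ∪ α₂ := by
    ext t
    simp only [Finset.mem_filter, Finset.mem_union, hα₁, hα₂, mem_Icc]
    constructor
    · rintro ⟨ht, h0, h1⟩
      have hg := hgap t ht
      simp only [mem_Ioo, not_and_or, not_lt] at hg
      rcases le_or_gt t (1/4) with hc | hc
      · exact Or.inl ⟨ht, h0, hc⟩
      · rcases hg with h | h
        · linarith
        · exact Or.inr ⟨ht, h, h1⟩
    · rintro (⟨ht, h0, h4⟩ | ⟨ht, h5, h1⟩)
      · exact ⟨ht, h0, by linarith⟩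
      · exact ⟨ht, by linarith, h1⟩
  rw [hsplit_set] at hinne hinopt
  have hs₁ : ∀ b ∈ α₁, b ∈ Icc (0:ℝ) (1/4) := by
    intro b hb
    rw [hα₁] at hb
    exact (Finset.mem_filter.mp hb).2
  have hs₂ : ∀ b ∈ α₂, b ∈ Icc (1/2:ℝ) 1 := by
    intro b hb
    rw [hα₂] at hb
    exact (Finset.mem_filter.mp hb).2
  have hdisj : Disjoint α₁ α₂ := by
    rw [Finset.disjoint_left]
    intro t ht1 ht2
    obtain ⟨_, h4⟩ := mem_Icc.mp (hs₁ t ht1)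
    obtain ⟨h5, _⟩ := mem_Icc.mp (hs₂ t ht2)
    linarith
  obtain ⟨h₁, h₂⟩ := parts_nonempty hP hn hs₁ hs₂ hinne hinopt
  have hune : (α₁ ∪ α₂).Nonempty := hinne
  have hcards : α₁.card + α₂.card ≤ n := by
    rw [← Finset.card_union_of_disjoint hdisj, ← hsplit_set]
    exact (Finset.card_le_card (Finset.filter_subset _ _)).trans hαcard
  have hj1 : 1 ≤ α₁.card := h₁.card_pos
  have hk1 : 1 ≤ α₂.card := h₂.card_pos
  have hnj1 : 1 ≤ n - α₁.card := by omega
  have hknj : α₂.card ≤ n - α₁.card := by omega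
  have hvor := voronoi hP hn h₁ h₂ hs₁ hs₂ hcards hinopt
  -- key split identity
  have hkey : qError P n = (1/64) * distortion P (α₁.image (fun x => 4 * x))
      + (3/16) * distortion P (α₂.image (fun x => 2 * x - 1)) := by
    rw [← hinopt, distortion_def, integral_split hP (continuous_err hune),
      setIntegral_congr_fun measurableSet_Icc (errJ1 h₁ hs₁ hs₂),
      setIntegral_congr_fun measurableSet_Icc (fun x hx => hvor x hx),
      setIntegralJ1_err hP h₁, setIntegralJ2_err hP h₂]
  have hima : (α₁.image (fun x => 4 * x)).card = α₁.card :=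
    Finset.card_image_of_injective _ (mul_right_injective₀ (by norm_num : (4:ℝ) ≠ 0))
  have himb : (α₂.image (fun x => 2 * x - 1)).card = α₂.card := by
    apply Finset.card_image_of_injective
    intro p q h
    dsimp at h
    linarith
  have hd1 : qError P α₁.card ≤ distortion P (α₁.image (fun x => 4 * x)) :=
    qError_le (h₁.image _) (le_of_eq hima) P
  have hd2 : qError P (n - α₁.card) ≤ distortion P (α₂.image (fun x => 2 * x - 1)) :=
    qError_le (h₂.image _) (himb ▸ hknj) P
  have hUB : qError P n ≤ (1/64) * qError P α₁.card + (3/16) * qError P (n - α₁.card) := by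
    have := qError_UB hP hj1 hnj1
    rwa [show α₁.card + (n - α₁.card) = n by omega] at this
  have heq1 : distortion P (α₁.image (fun x => 4 * x)) = qError P α₁.card := by linarith
  have heq2 : distortion P (α₂.image (fun x => 2 * x - 1)) = qError P (n - α₁.card) := by
    linarith
  refine ⟨⟨h₁.image _, le_of_eq hima, heq1⟩, ⟨h₂.image _, himb ▸ hknj, heq2⟩, ?_⟩
  rw [hkey, heq1, heq2]

end
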